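/- Suppose in addition to the assumptions of the K-treatment decomposition theorem that E[Δ^{-1}_{g,t}|𝐃] = Σ_{k=2}^K D^k_{g,t} δ^k_{g,t} for some constants δ^k_{g,t} (no complementarity between treatments 2,...,K). Then β_fe = E[ Σ_{(g,t):D^1_{g,t}=1}(N_{g,t}/N_1) w_{g,t} Δ^1_{g,t}(D^{-1}_{g,t}) + Σ_{k=2}^K Σ_{(g,t):D^k_{g,t}=1}(N_{g,t}/N_1) w_{g,t} δ^k_{g,t} ], with Σ_{(g,t):D^1_{g,t}=1}(N_{g,t}/N_1)w_{g,t}=1 and Σ_{(g,t):D^k_{g,t}=1}(N_{g,t}/N_1)w_{g,t}=0 for every k∈{2,...,K}. -/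

import Mathlib

open Finset MeasureTheory ProbabilityTheory

/-!
For every realization of the design, the Frisch–Waugh–Lovell theorem writes the TWFE coefficient
as `∑ (N/N₁) w Y`, where `w` is the normalised residual of the first-stage regression of `D¹` on
the other regressors. The normal equations of that regression make the weights sum to zero within
every group, within every period and against every other treatment, and to one against `D¹`.
Least-squares residuals are unique, so the weights are functions of the design; on each of the
finitely many atoms of the design they are constants.

Writing `Y = Y(0, D⁻¹) + D¹ Δ¹`, the difference between `β̂` and the right-hand side is
`∑ (N/N₁) w (Y(0, D⁻¹) - ∑ₖ Dᵏ δᵏ)`. On an atom, no complementarity turns the integral of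
`Y(0, D⁻¹)` into that of `Y(0, 𝟎)` plus `∑ₖ Dᵏ δᵏ`, and independence across groups, strong
exogeneity and common trends make the atom-integrals of `Y(0, 𝟎)` additive in group and period,
which the weights annihilate.
-/

section LeastSquares

variable {ι P : Type*} [AddCommGroup P] [Module ℝ P]

def IsWLSFit (s : Finset ι) (n y : ι → ℝ) (L : P →ₗ[ℝ] ι → ℝ) (θ₀ : P) : Prop :=
  ∀ θ, ∑ i ∈ s, n i * (y i - L θ₀ i) ^ 2 ≤ ∑ i ∈ s, n i * (y i - L θ i) ^ 2

theorem sum_mul_mul_eq_zero_of_forall_le {s : Finset ι} {n r x : ι → ℝ}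
    (h : ∀ c : ℝ, ∑ i ∈ s, n i * r i ^ 2 ≤ ∑ i ∈ s, n i * (r i - c * x i) ^ 2) :
    ∑ i ∈ s, n i * r i * x i = 0 := by
  have hquad : ∀ c : ℝ, 0 ≤ (∑ i ∈ s, n i * x i ^ 2) * (c * c)
      + (-2 * ∑ i ∈ s, n i * r i * x i) * c + 0 := by
    intro c
    have hexpand : ∑ i ∈ s, n i * (r i - c * x i) ^ 2 = ∑ i ∈ s, n i * r i ^ 2
        + ((∑ i ∈ s, n i * x i ^ 2) * (c * c) + (-2 * ∑ i ∈ s, n i * r i * x i) * c) := by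
      simp only [Finset.sum_mul, Finset.mul_sum, ← Finset.sum_add_distrib]
      exact Finset.sum_congr rfl fun i _ => by ring
    linarith [h c]
  have hdisc := discrim_le_zero hquad
  rw [discrim] at hdisc
  nlinarith [sq_nonneg (∑ i ∈ s, n i * r i * x i)]

namespace IsWLSFit

variable {s : Finset ι} {n y : ι → ℝ} {L : P →ₗ[ℝ] ι → ℝ} {θ₀ : P}

theorem sum_mul_residual_mul_eq_zero (h : IsWLSFit s n y L θ₀) (θ : P) :
    ∑ i ∈ s, n i * (y i - L θ₀ i) * L θ i = 0 :=
  sum_mul_mul_eq_zero_of_forall_le fun c => by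
    simpa only [map_add, map_smul, Pi.add_apply, Pi.smul_apply, smul_eq_mul,
      sub_add_eq_sub_sub] using h (θ₀ + c • θ)

theorem congr {y' : ι → ℝ} {L' : P →ₗ[ℝ] ι → ℝ} (h : IsWLSFit s n y L θ₀)
    (hy : Set.EqOn y y' s) (hL : ∀ θ, Set.EqOn (L θ) (L' θ) s) : IsWLSFit s n y' L' θ₀ := by
  have hrw : ∀ θ, ∑ i ∈ s, n i * (y' i - L' θ i) ^ 2 = ∑ i ∈ s, n i * (y i - L θ i) ^ 2 :=
    fun θ => Finset.sum_congr rfl fun i hi => by rw [hy hi, hL θ hi]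
  intro θ
  rw [hrw, hrw]
  exact h θ

theorem fitted_eqOn {θ₁ : P} (h₀ : IsWLSFit s n y L θ₀) (h₁ : IsWLSFit s n y L θ₁)
    (hn : ∀ i ∈ s, 0 < n i) : Set.EqOn (L θ₀) (L θ₁) s := by
  have hzero : ∑ i ∈ s, n i * (L θ₀ i - L θ₁ i) ^ 2 = 0 :=
    calc ∑ i ∈ s, n i * (L θ₀ i - L θ₁ i) ^ 2
        = ∑ i ∈ s, n i * (y i - L θ₁ i) * L (θ₀ - θ₁) i
          - ∑ i ∈ s, n i * (y i - L θ₀ i) * L (θ₀ - θ₁) i := by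
          rw [← Finset.sum_sub_distrib]
          exact Finset.sum_congr rfl fun i _ => by simp only [map_sub, Pi.sub_apply]; ring
      _ = 0 := by rw [h₁.sum_mul_residual_mul_eq_zero, h₀.sum_mul_residual_mul_eq_zero, sub_zero]
  intro i hi
  have hsq := (Finset.sum_eq_zero_iff_of_nonneg fun j hj =>
    mul_nonneg (hn j hj).le (sq_nonneg _)).mp hzero i hi
  exact sub_eq_zero.mp <| pow_eq_zero_iff two_ne_zero |>.mp <|
    (mul_eq_zero.mp hsq).resolve_left (hn i hi).ne'

theorem residual_eqOn_of_eqOn {y' : ι → ℝ} {L' : P →ₗ[ℝ] ι → ℝ} {θ₀' : P}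
    (h : IsWLSFit s n y L θ₀) (h' : IsWLSFit s n y' L' θ₀') (hn : ∀ i ∈ s, 0 < n i)
    (hy : Set.EqOn y y' s) (hL : ∀ θ, Set.EqOn (L θ) (L' θ) s) :
    Set.EqOn (fun i => y i - L θ₀ i) (fun i => y' i - L' θ₀' i) s := fun i hi => by
  have hfitted := h.fitted_eqOn (h'.congr hy.symm fun θ => (hL θ).symm) hn hi
  simp only [hy hi, hfitted, hL θ₀' hi]

end IsWLSFit

def addRegressor (L : P →ₗ[ℝ] ι → ℝ) (d : ι → ℝ) : ℝ × P →ₗ[ℝ] ι → ℝ :=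
  (LinearMap.fst ℝ ℝ P).smulRight d + L ∘ₗ LinearMap.snd ℝ ℝ P

@[simp]
theorem addRegressor_apply (L : P →ₗ[ℝ] ι → ℝ) (d : ι → ℝ) (b : ℝ) (θ : P) :
    addRegressor L d (b, θ) = b • d + L θ := rfl

theorem IsWLSFit.frisch_waugh_lovell {s : Finset ι} {n y d : ι → ℝ} {L : P →ₗ[ℝ] ι → ℝ}
    {θ₀ θ : P} {β : ℝ} (h₀ : IsWLSFit s n d L θ₀)
    (h : IsWLSFit s n y (addRegressor L d) (β, θ)) :
    β * ∑ i ∈ s, n i * (d i - L θ₀ i) * d i = ∑ i ∈ s, n i * (d i - L θ₀ i) * y i := by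
  -- the first-stage residual `d - L θ₀` is itself a fitted value of the long regression
  have hlong := h.sum_mul_residual_mul_eq_zero (1, -θ₀)
  have hshort := h₀.sum_mul_residual_mul_eq_zero θ
  simp only [addRegressor_apply, Pi.add_apply, Pi.smul_apply, smul_eq_mul, map_neg,
    Pi.neg_apply] at hlong
  calc β * ∑ i ∈ s, n i * (d i - L θ₀ i) * d i
      = β * ∑ i ∈ s, n i * (d i - L θ₀ i) * d i
        + ∑ i ∈ s, n i * (y i - (β * d i + L θ i)) * (1 * d i + -L θ₀ i)
        + ∑ i ∈ s, n i * (d i - L θ₀ i) * L θ i := by rw [hlong, hshort]; ring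
    _ = ∑ i ∈ s, n i * (d i - L θ₀ i) * y i := by
      rw [Finset.mul_sum, ← Finset.sum_add_distrib, ← Finset.sum_add_distrib]
      exact Finset.sum_congr rfl fun i _ => by ring

end LeastSquares

section TwoWayFixedEffects

variable {ι κ : Type*} {m : ℕ}

-- fitted values `α + γᵢ + νⱼ + ∑ₖ ζₖ xᵏᵢⱼ` of a regression on group and period dummies and `x`
def twfeDesign (x : Fin m → ι → κ → ℝ) :
    (ℝ × (ι → ℝ) × (κ → ℝ) × (Fin m → ℝ)) →ₗ[ℝ] ι × κ → ℝ where
  toFun θ p := θ.1 + θ.2.1 p.1 + θ.2.2.1 p.2 + ∑ k, θ.2.2.2 k * x k p.1 p.2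
  map_add' θ θ' := by
    ext p
    simp only [Prod.fst_add, Prod.snd_add, Pi.add_apply, add_mul, Finset.sum_add_distrib]
    ring
  map_smul' c θ := by
    ext p
    simp only [Prod.smul_fst, Prod.smul_snd, Pi.smul_apply, smul_eq_mul, RingHom.id_apply,
      mul_assoc, ← Finset.mul_sum]
    ring

@[simp]
theorem twfeDesign_apply (x : Fin m → ι → κ → ℝ) (a : ℝ) (c : ι → ℝ) (v : κ → ℝ)
    (z : Fin m → ℝ) (i : ι) (j : κ) :
    twfeDesign x (a, c, v, z) (i, j) = a + c i + v j + ∑ k, z k * x k i j := rfl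

def IsTWFEFit (s : Finset ι) (s' : Finset κ) (n y : ι → κ → ℝ) (x : Fin m → ι → κ → ℝ)
    (a : ℝ) (c : ι → ℝ) (v : κ → ℝ) (z : Fin m → ℝ) : Prop :=
  ∀ (a' : ℝ) (c' : ι → ℝ) (v' : κ → ℝ) (z' : Fin m → ℝ),
    ∑ i ∈ s, ∑ j ∈ s', n i j * (y i j - a - c i - v j - ∑ k, z k * x k i j) ^ 2 ≤
      ∑ i ∈ s, ∑ j ∈ s', n i j * (y i j - a' - c' i - v' j - ∑ k, z' k * x k i j) ^ 2

variable {s : Finset ι} {s' : Finset κ} {n y r : ι → κ → ℝ} {x : Fin m → ι → κ → ℝ}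
  {a : ℝ} {c : ι → ℝ} {v : κ → ℝ} {z : Fin m → ℝ}

theorem IsTWFEFit.isWLSFit (h : IsTWFEFit s s' n y x a c v z) :
    IsWLSFit (s ×ˢ s') (Function.uncurry n) (Function.uncurry y) (twfeDesign x) (a, c, v, z) :=
  fun ⟨a', c', v', z'⟩ => by
    simpa only [Finset.sum_product, Function.uncurry_apply_pair, twfeDesign_apply,
      sub_add_eq_sub_sub] using h a' c' v' z'

theorem isWLSFit_addRegressor_twfeDesign {d : ι → κ → ℝ} {α β : ℝ} {γ : ι → ℝ} {ν : κ → ℝ}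
    {ζ : Fin m → ℝ}
    (h : ∀ (α' β' : ℝ) (γ' : ι → ℝ) (ν' : κ → ℝ) (ζ' : Fin m → ℝ),
      ∑ i ∈ s, ∑ j ∈ s', n i j * (y i j - α - γ i - ν j - β * d i j
        - ∑ k, ζ k * x k i j) ^ 2 ≤
      ∑ i ∈ s, ∑ j ∈ s', n i j * (y i j - α' - γ' i - ν' j - β' * d i j
        - ∑ k, ζ' k * x k i j) ^ 2) :
    IsWLSFit (s ×ˢ s') (Function.uncurry n) (Function.uncurry y)
      (addRegressor (twfeDesign x) (Function.uncurry d)) (β, α, γ, ν, ζ) := by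
  have hrw : ∀ (α β : ℝ) (γ : ι → ℝ) (ν : κ → ℝ) (ζ : Fin m → ℝ), ∀ p ∈ s ×ˢ s',
      Function.uncurry n p * (Function.uncurry y p
        - addRegressor (twfeDesign x) (Function.uncurry d) (β, α, γ, ν, ζ) p) ^ 2 =
      n p.1 p.2 * (y p.1 p.2 - α - γ p.1 - ν p.2 - β * d p.1 p.2
        - ∑ k, ζ k * x k p.1 p.2) ^ 2 := fun α β γ ν ζ ⟨i, j⟩ _ => by
    simp only [addRegressor_apply, Pi.add_apply, Pi.smul_apply, smul_eq_mul,
      twfeDesign_apply, Function.uncurry_apply_pair]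
    ring
  rintro ⟨β', α', γ', ν', ζ'⟩
  rw [Finset.sum_congr rfl (hrw _ _ _ _ _), Finset.sum_congr rfl (hrw _ _ _ _ _),
    Finset.sum_product' (f := fun i j => n i j * (y i j - α - γ i - ν j - β * d i j
        - ∑ k, ζ k * x k i j) ^ 2),
    Finset.sum_product' (f := fun i j => n i j * (y i j - α' - γ' i - ν' j - β' * d i j
        - ∑ k, ζ' k * x k i j) ^ 2)]
  exact h α' β' γ' ν' ζ'

namespace IsTWFEFit

theorem residual_eq (hr : ∀ i j, r i j = y i j - a - c i - v j - ∑ k, z k * x k i j)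
    (i : ι) (j : κ) : r i j = y i j - twfeDesign x (a, c, v, z) (i, j) := by
  rw [hr, twfeDesign_apply]
  ring

theorem sum_sum_mul_residual_mul_eq_zero (h : IsTWFEFit s s' n y x a c v z)
    (hr : ∀ i j, r i j = y i j - a - c i - v j - ∑ k, z k * x k i j)
    (θ : ℝ × (ι → ℝ) × (κ → ℝ) × (Fin m → ℝ)) :
    ∑ i ∈ s, ∑ j ∈ s', n i j * r i j * twfeDesign x θ (i, j) = 0 := by
  simp only [residual_eq hr]
  rw [← Finset.sum_product' (f := fun i j => n i j * (y i j - twfeDesign x (a, c, v, z) (i, j))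
    * twfeDesign x θ (i, j))]
  exact h.isWLSFit.sum_mul_residual_mul_eq_zero θ

theorem sum_mul_residual_eq_zero_of_mem_left (h : IsTWFEFit s s' n y x a c v z)
    (hr : ∀ i j, r i j = y i j - a - c i - v j - ∑ k, z k * x k i j) {i : ι} (hi : i ∈ s) :
    ∑ j ∈ s', n i j * r i j = 0 := by
  classical
  simpa [hi, ite_and] using
    h.sum_sum_mul_residual_mul_eq_zero hr (0, fun i' => if i' = i then 1 else 0, 0, 0)

theorem sum_mul_residual_eq_zero_of_mem_right (h : IsTWFEFit s s' n y x a c v z)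
    (hr : ∀ i j, r i j = y i j - a - c i - v j - ∑ k, z k * x k i j) {j : κ} (hj : j ∈ s') :
    ∑ i ∈ s, n i j * r i j = 0 := by
  classical
  simpa [hj] using
    h.sum_sum_mul_residual_mul_eq_zero hr (0, 0, fun j' => if j' = j then 1 else 0, 0)

theorem sum_sum_mul_residual_mul_regressor_eq_zero (h : IsTWFEFit s s' n y x a c v z)
    (hr : ∀ i j, r i j = y i j - a - c i - v j - ∑ k, z k * x k i j) (k : Fin m) :
    ∑ i ∈ s, ∑ j ∈ s', n i j * r i j * x k i j = 0 := by
  classical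
  simpa [Pi.single_apply] using h.sum_sum_mul_residual_mul_eq_zero hr (0, 0, 0, Pi.single k 1)

theorem residual_eq_of_eqOn {y' r' : ι → κ → ℝ} {x' : Fin m → ι → κ → ℝ} {a' : ℝ}
    {c' : ι → ℝ} {v' : κ → ℝ} {z' : Fin m → ℝ} (h : IsTWFEFit s s' n y x a c v z)
    (hr : ∀ i j, r i j = y i j - a - c i - v j - ∑ k, z k * x k i j)
    (h' : IsTWFEFit s s' n y' x' a' c' v' z')
    (hr' : ∀ i j, r' i j = y' i j - a' - c' i - v' j - ∑ k, z' k * x' k i j)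
    (hn : ∀ i ∈ s, ∀ j ∈ s', 0 < n i j) (hy : ∀ i ∈ s, ∀ j ∈ s', y i j = y' i j)
    (hx : ∀ k, ∀ i ∈ s, ∀ j ∈ s', x k i j = x' k i j) {i : ι} (hi : i ∈ s) {j : κ}
    (hj : j ∈ s') : r i j = r' i j := by
  rw [residual_eq hr, residual_eq hr']
  refine h.isWLSFit.residual_eqOn_of_eqOn h'.isWLSFit
    (fun p hp => hn p.1 (Finset.mem_product.mp hp).1 p.2 (Finset.mem_product.mp hp).2)
    (fun p hp => hy p.1 (Finset.mem_product.mp hp).1 p.2 (Finset.mem_product.mp hp).2)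
    (fun θ p hp => ?_) (Finset.mk_mem_product hi hj)
  obtain ⟨hp₁, hp₂⟩ := Finset.mem_product.mp hp
  simp only [twfeDesign, LinearMap.coe_mk, AddHom.coe_mk, hx _ _ hp₁ _ hp₂]

end IsTWFEFit

end TwoWayFixedEffects

section TwoWayFixedEffectsWeights

variable {ι κ : Type*} {m : ℕ} {s : Finset ι} {s' : Finset κ} {n d r : ι → κ → ℝ}
  {x : Fin m → ι → κ → ℝ} {a : ℝ} {c : ι → ℝ} {v : κ → ℝ} {z : Fin m → ℝ}

-- the paper's `(N_{g,t} / N₁) w_{g,t}`, in which `N₁` cancels (`div_mul_eq_twfeWeight`)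
noncomputable def twfeWeight (s : Finset ι) (s' : Finset κ) (n d r : ι → κ → ℝ) (i : ι)
    (j : κ) : ℝ :=
  n i j * r i j / ∑ i' ∈ s, ∑ j' ∈ s', n i' j' * r i' j' * d i' j'

theorem mul_eq_sum_sum_mul_mul {N₁ ebar : ℝ} (hN₁ : N₁ ≠ 0)
    (hebar : ebar = ∑ i ∈ s, ∑ j ∈ s', n i j / N₁ * d i j * r i j) :
    N₁ * ebar = ∑ i ∈ s, ∑ j ∈ s', n i j * r i j * d i j := by
  simp only [hebar, Finset.mul_sum]
  exact Finset.sum_congr rfl fun i _ => Finset.sum_congr rfl fun j _ => by field_simp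

theorem div_mul_eq_twfeWeight {N₁ ebar : ℝ} {w : ι → κ → ℝ} (hN₁ : N₁ ≠ 0)
    (hebar : ebar = ∑ i ∈ s, ∑ j ∈ s', n i j / N₁ * d i j * r i j)
    (hw : ∀ i j, w i j = r i j / ebar) (i : ι) (j : κ) :
    n i j / N₁ * w i j = twfeWeight s s' n d r i j := by
  rw [twfeWeight, ← mul_eq_sum_sum_mul_mul hN₁ hebar, hw]
  ring

theorem sum_sum_mul_mul_ne_zero {N₁ ebar : ℝ} (hN₁ : N₁ ≠ 0)
    (hebar : ebar = ∑ i ∈ s, ∑ j ∈ s', n i j / N₁ * d i j * r i j) (hebar₀ : ebar ≠ 0) :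
    ∑ i ∈ s, ∑ j ∈ s', n i j * r i j * d i j ≠ 0 :=
  mul_eq_sum_sum_mul_mul hN₁ hebar ▸ mul_ne_zero hN₁ hebar₀

theorem sum_sum_mul_twfeWeight (f : ι → κ → ℝ) :
    ∑ i ∈ s, ∑ j ∈ s', f i j * twfeWeight s s' n d r i j =
      (∑ i ∈ s, ∑ j ∈ s', n i j * r i j * f i j) /
        ∑ i ∈ s, ∑ j ∈ s', n i j * r i j * d i j := by
  simp only [twfeWeight, Finset.sum_div]
  exact Finset.sum_congr rfl fun i _ => Finset.sum_congr rfl fun j _ => by ring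

theorem sum_sum_treatment_mul_twfeWeight_eq_one
    (hden : ∑ i ∈ s, ∑ j ∈ s', n i j * r i j * d i j ≠ 0) :
    ∑ i ∈ s, ∑ j ∈ s', d i j * twfeWeight s s' n d r i j = 1 := by
  rw [sum_sum_mul_twfeWeight, div_self hden]

namespace IsTWFEFit

theorem sum_twfeWeight_eq_zero_of_mem_left (h : IsTWFEFit s s' n d x a c v z)
    (hr : ∀ i j, r i j = d i j - a - c i - v j - ∑ k, z k * x k i j) {i : ι} (hi : i ∈ s) :
    ∑ j ∈ s', twfeWeight s s' n d r i j = 0 := by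
  simp only [twfeWeight, ← Finset.sum_div, h.sum_mul_residual_eq_zero_of_mem_left hr hi,
    zero_div]

theorem sum_twfeWeight_eq_zero_of_mem_right (h : IsTWFEFit s s' n d x a c v z)
    (hr : ∀ i j, r i j = d i j - a - c i - v j - ∑ k, z k * x k i j) {j : κ} (hj : j ∈ s') :
    ∑ i ∈ s, twfeWeight s s' n d r i j = 0 := by
  simp only [twfeWeight, ← Finset.sum_div, h.sum_mul_residual_eq_zero_of_mem_right hr hj,
    zero_div]

theorem sum_sum_regressor_mul_twfeWeight_eq_zero (h : IsTWFEFit s s' n d x a c v z)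
    (hr : ∀ i j, r i j = d i j - a - c i - v j - ∑ k, z k * x k i j) (k : Fin m) :
    ∑ i ∈ s, ∑ j ∈ s', x k i j * twfeWeight s s' n d r i j = 0 := by
  rw [sum_sum_mul_twfeWeight, h.sum_sum_mul_residual_mul_regressor_eq_zero hr, zero_div]

theorem eq_sum_sum_twfeWeight_mul {y : ι → κ → ℝ} {α β : ℝ} {γ : ι → ℝ} {ν : κ → ℝ}
    {ζ : Fin m → ℝ} (h : IsTWFEFit s s' n d x a c v z)
    (hr : ∀ i j, r i j = d i j - a - c i - v j - ∑ k, z k * x k i j)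
    (hlong : ∀ (α' β' : ℝ) (γ' : ι → ℝ) (ν' : κ → ℝ) (ζ' : Fin m → ℝ),
      ∑ i ∈ s, ∑ j ∈ s', n i j * (y i j - α - γ i - ν j - β * d i j
        - ∑ k, ζ k * x k i j) ^ 2 ≤
      ∑ i ∈ s, ∑ j ∈ s', n i j * (y i j - α' - γ' i - ν' j - β' * d i j
        - ∑ k, ζ' k * x k i j) ^ 2)
    (hden : ∑ i ∈ s, ∑ j ∈ s', n i j * r i j * d i j ≠ 0) :
    β = ∑ i ∈ s, ∑ j ∈ s', twfeWeight s s' n d r i j * y i j := by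
  have hfwl := h.isWLSFit.frisch_waugh_lovell (isWLSFit_addRegressor_twfeDesign hlong)
  simp only [Finset.sum_product, Function.uncurry_apply_pair, ← residual_eq hr] at hfwl
  simp only [mul_comm (twfeWeight s s' n d r _ _), sum_sum_mul_twfeWeight, ← hfwl,
    mul_div_cancel_right₀ _ hden]

theorem twfeWeight_eq_of_eqOn {d' r' : ι → κ → ℝ} {x' : Fin m → ι → κ → ℝ} {a' : ℝ}
    {c' : ι → ℝ} {v' : κ → ℝ} {z' : Fin m → ℝ} (h : IsTWFEFit s s' n d x a c v z)
    (hr : ∀ i j, r i j = d i j - a - c i - v j - ∑ k, z k * x k i j)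
    (h' : IsTWFEFit s s' n d' x' a' c' v' z')
    (hr' : ∀ i j, r' i j = d' i j - a' - c' i - v' j - ∑ k, z' k * x' k i j)
    (hn : ∀ i ∈ s, ∀ j ∈ s', 0 < n i j) (hd : ∀ i ∈ s, ∀ j ∈ s', d i j = d' i j)
    (hx : ∀ k, ∀ i ∈ s, ∀ j ∈ s', x k i j = x' k i j) {i : ι} (hi : i ∈ s) {j : κ}
    (hj : j ∈ s') : twfeWeight s s' n d r i j = twfeWeight s s' n d' r' i j := by
  have hres := fun i hi j hj => h.residual_eq_of_eqOn hr h' hr' hn hd hx (i := i) hi (j := j) hj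
  rw [twfeWeight, twfeWeight, hres i hi j hj]
  congr 1
  exact Finset.sum_congr rfl fun i hi => Finset.sum_congr rfl fun j hj => by
    rw [hres i hi j hj, hd i hi j hj]

end IsTWFEFit

theorem sum_sum_mul_mul_sub_eq {W₁ W₂ y y₀ d Δ : ι → κ → ℝ} {δ : Fin m → ι → κ → ℝ}
    (hy : ∀ i j, y i j = y₀ i j + d i j * Δ i j) :
    ∑ i ∈ s, ∑ j ∈ s', W₁ i j * W₂ i j * y i j
      - ((∑ i ∈ s, ∑ j ∈ s', d i j * W₁ i j * W₂ i j * Δ i j)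
        + ∑ k, ∑ i ∈ s, ∑ j ∈ s', x k i j * W₁ i j * W₂ i j * δ k i j) =
      ∑ i ∈ s, ∑ j ∈ s', W₁ i j * W₂ i j * (y₀ i j - ∑ k, x k i j * δ k i j) := by
  have hother : ∑ k, ∑ i ∈ s, ∑ j ∈ s', x k i j * W₁ i j * W₂ i j * δ k i j =
      ∑ i ∈ s, ∑ j ∈ s', W₁ i j * W₂ i j * ∑ k, x k i j * δ k i j := by
    rw [Finset.sum_comm]
    refine Finset.sum_congr rfl fun i _ => ?_
    rw [Finset.sum_comm]
    refine Finset.sum_congr rfl fun j _ => ?_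
    rw [Finset.mul_sum]
    exact Finset.sum_congr rfl fun k _ => by ring
  rw [hother, sub_eq_iff_eq_add]
  simp only [← Finset.sum_add_distrib]
  exact Finset.sum_congr rfl fun i _ => Finset.sum_congr rfl fun j _ => by rw [hy]; ring

end TwoWayFixedEffectsWeights

section ParallelTrends

variable {ι κ : Type*}

theorem sum_sum_mul_add_eq_zero {s : Finset ι} {s' : Finset κ} {W : ι → κ → ℝ}
    (hrow : ∀ i ∈ s, ∑ j ∈ s', W i j = 0) (hcol : ∀ j ∈ s', ∑ i ∈ s, W i j = 0)
    (a : ι → ℝ) (b : κ → ℝ) : ∑ i ∈ s, ∑ j ∈ s', W i j * (a i + b j) = 0 := by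
  simp only [mul_add, Finset.sum_add_distrib]
  rw [Finset.sum_comm (f := fun i j => W i j * b j)]
  simp only [← Finset.sum_mul]
  rw [Finset.sum_eq_zero fun i hi => by rw [hrow i hi, zero_mul],
    Finset.sum_eq_zero fun j hj => by rw [hcol j hj, zero_mul], add_zero]

theorem eq_add_sub_of_parallel_trends {T : ℕ} {x : ι → ℕ → ℝ} {i j : ι}
    (htrend : ∀ t, 2 ≤ t → t ≤ T → x i t - x i (t - 1) = x j t - x j (t - 1))
    {t : ℕ} (ht : t ∈ Finset.Icc 1 T) : x i t = x i 1 + (x j t - x j 1) := by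
  obtain ⟨ht1, htT⟩ := Finset.mem_Icc.mp ht
  induction t, ht1 using Nat.le_induction with
  | base => ring
  | succ t ht1 ih =>
    have hstep := htrend (t + 1) (by omega) htT
    rw [Nat.add_sub_cancel] at hstep
    rw [ih (Finset.mem_Icc.mpr ⟨ht1, by omega⟩) (by omega)] at hstep
    linarith

theorem sum_sum_mul_eq_zero_of_parallel_trends {s : Finset ι} {T : ℕ} {W x : ι → ℕ → ℝ}
    (hrow : ∀ i ∈ s, ∑ t ∈ Finset.Icc 1 T, W i t = 0)
    (hcol : ∀ t ∈ Finset.Icc 1 T, ∑ i ∈ s, W i t = 0)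
    (htrend : ∀ i ∈ s, ∀ j ∈ s, ∀ t, 2 ≤ t → t ≤ T →
      x i t - x i (t - 1) = x j t - x j (t - 1)) :
    ∑ i ∈ s, ∑ t ∈ Finset.Icc 1 T, W i t * x i t = 0 := by
  rcases s.eq_empty_or_nonempty with rfl | ⟨j, hj⟩
  · exact Finset.sum_empty
  rw [← sum_sum_mul_add_eq_zero hrow hcol (fun i => x i 1) (fun t => x j t - x j 1)]
  exact Finset.sum_congr rfl fun i hi => Finset.sum_congr rfl fun t ht => by
    rw [eq_add_sub_of_parallel_trends (htrend i hi j hj) ht]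

end ParallelTrends

section Integration

variable {Ω : Type*} {m₀ : MeasurableSpace Ω} {μ : Measure Ω}

theorem integral_eq_sum_setIntegral_preimage_singleton {β : Type*} [Fintype β]
    [MeasurableSpace β] [MeasurableSingletonClass β] {Z : Ω → β} (hZ : Measurable Z)
    {f : Ω → ℝ} (hf : Integrable f μ) : ∫ ω, f ω ∂μ = ∑ b, ∫ ω in Z ⁻¹' {b}, f ω ∂μ := by
  rw [← integral_iUnion_fintype (fun b => hZ (measurableSet_singleton b))
    (fun b b' hbb' => Set.disjoint_singleton.mpr hbb' |>.preimage Z) fun b => hf.integrableOn,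
    ← Set.preimage_iUnion, Set.iUnion_singleton_eq_range, Set.range_id', Set.preimage_univ,
    setIntegral_univ]

theorem integrable_apply_of_finite {α : Type*} [Finite α] [MeasurableSpace α]
    [MeasurableSingletonClass α] {X : Ω → α} (hX : Measurable X) {f : α → Ω → ℝ}
    (hf : ∀ a, Integrable (f a) μ) : Integrable (fun ω => f (X ω) ω) μ := by
  classical
  have := Fintype.ofFinite α
  have hsum : (fun ω => f (X ω) ω) = ∑ a, (X ⁻¹' {a}).indicator (f a) := by
    ext ω
    simp [Set.indicator_apply, eq_comm]
  rw [hsum]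
  exact integrable_finsetSum' _ fun a _ => (hf a).indicator (hX (measurableSet_singleton a))

theorem setIntegral_eq_measureReal_mul_of_condExp_ae_eq [IsFiniteMeasure μ]
    {m : MeasurableSpace Ω} (hm : m ≤ m₀) {A : Set Ω} (hA : MeasurableSet[m] A)
    {f h : Ω → ℝ} (hf : Integrable f μ) (hcond : μ[f|m] =ᵐ[μ] h) {c : ℝ}
    (hc : ∀ ω ∈ A, h ω = c) : ∫ ω in A, f ω ∂μ = μ.real A * c := by
  rw [← setIntegral_condExp hm hf hA, setIntegral_congr_ae (hm A hA)
    (hcond.mono fun ω hω _ => hω), setIntegral_congr_fun (hm A hA) hc, setIntegral_const,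
    smul_eq_mul]

theorem setIntegral_iInter_preimage_eq_measureReal_mul {ι β : Type*} [Fintype ι]
    [MeasurableSpace β] {V : ι → Ω → β} (hV : iIndepFun V μ) (hVm : ∀ i, Measurable (V i))
    {S : ι → Set β} (hS : ∀ i, MeasurableSet (S i)) (g : ι) {φ : β → ℝ} (hφ : Measurable φ) :
    ∫ ω in ⋂ i, V i ⁻¹' S i, φ (V g ω) ∂μ =
      μ.real (⋂ (i) (_ : i ≠ g), V i ⁻¹' S i) * ∫ ω in V g ⁻¹' S g, φ (V g ω) ∂μ := by
  classical
  set X := fun ω (i : ({g}ᶜ : Finset ι)) => V i ω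
  set Y := fun ω (i : ({g} : Finset ι)) => V i ω
  have hX : Measurable X := measurable_pi_lambda _ fun i => hVm i
  have hY : Measurable Y := measurable_pi_lambda _ fun i => hVm i
  set χ : (({g}ᶜ : Finset ι) → β) → ℝ :=
    (Set.univ.pi fun i : ({g}ᶜ : Finset ι) => S i).indicator 1
  have hχ : Measurable χ := measurable_one.indicator (MeasurableSet.univ_pi fun i => hS i)
  set ψ : (({g} : Finset ι) → β) → ℝ :=
    fun v => (S g).indicator φ (v ⟨g, Finset.mem_singleton_self g⟩)
  have hψ : Measurable ψ := (hφ.indicator (hS g)).comp (measurable_pi_apply _)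
  have hprod := ((hV.indepFun_finset {g}ᶜ {g} disjoint_compl_left hVm).comp hχ hψ
    ).integral_mul_eq_mul_integral (hχ.comp hX).aestronglyMeasurable
    (hψ.comp hY).aestronglyMeasurable
  have hχX : χ ∘ X = (⋂ (i) (_ : i ≠ g), V i ⁻¹' S i).indicator 1 := by
    ext ω
    simp [χ, X, Set.indicator_apply]
  have hψY : ψ ∘ Y = (V g ⁻¹' S g).indicator fun ω => φ (V g ω) := by
    ext ω
    simp [ψ, Y, Set.indicator_apply]
  have hmeas : MeasurableSet (⋂ (i) (_ : i ≠ g), V i ⁻¹' S i) :=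
    MeasurableSet.iInter fun i => MeasurableSet.iInter fun _ => hVm i (hS i)
  have hinter : (⋂ (i) (_ : i ≠ g), V i ⁻¹' S i).indicator 1 *
      (V g ⁻¹' S g).indicator (fun ω => φ (V g ω)) =
      (⋂ i, V i ⁻¹' S i).indicator fun ω => φ (V g ω) := by
    have hsplit : ⋂ i, V i ⁻¹' S i = (⋂ (i) (_ : i ≠ g), V i ⁻¹' S i) ∩ V g ⁻¹' S g := by
      ext ω
      simp only [Set.mem_iInter, Set.mem_inter_iff, Set.mem_preimage]
      exact ⟨fun h => ⟨fun i _ => h i, h g⟩,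
        fun h i => if hi : i = g then hi ▸ h.2 else h.1 i hi⟩
    ext ω
    simp only [hsplit, Pi.mul_apply, ← Set.inter_indicator_mul, Pi.one_apply, one_mul]
  rw [hχX, hψY, hinter, integral_indicator_one hmeas, integral_indicator (hVm g (hS g))] at hprod
  rw [← integral_indicator (MeasurableSet.iInter fun i => hVm i (hS i))]
  exact hprod

theorem setIntegral_iInter_preimage_eq_measureReal_mul_of_setIntegral_eq {ι β : Type*}
    [Fintype ι] [MeasurableSpace β] {V : ι → Ω → β} (hV : iIndepFun V μ)
    (hVm : ∀ i, Measurable (V i)) {S : ι → Set β} (hS : ∀ i, MeasurableSet (S i)) (g : ι)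
    {φ : β → ℝ} (hφ : Measurable φ) {c : ℝ}
    (hmean : ∫ ω in V g ⁻¹' S g, φ (V g ω) ∂μ = μ.real (V g ⁻¹' S g) * c) :
    ∫ ω in ⋂ i, V i ⁻¹' S i, φ (V g ω) ∂μ = μ.real (⋂ i, V i ⁻¹' S i) * c := by
  have hone := setIntegral_iInter_preimage_eq_measureReal_mul hV hVm hS g (φ := fun _ => (1 : ℝ))
    measurable_const
  simp only [setIntegral_const, smul_eq_mul, mul_one] at hone
  rw [setIntegral_iInter_preimage_eq_measureReal_mul hV hVm hS g hφ, hmean, hone, mul_assoc]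

theorem setIntegral_sum_sum_mul_sub_const [IsFiniteMeasure μ] {ι κ : Type*} {s : Finset ι}
    {s' : Finset κ} (A : Set Ω) {c k : ι → κ → ℝ} {f : ι → κ → Ω → ℝ}
    (hf : ∀ i j, Integrable (f i j) μ) :
    ∫ ω in A, ∑ i ∈ s, ∑ j ∈ s', c i j * (f i j ω - k i j) ∂μ =
      ∑ i ∈ s, ∑ j ∈ s', c i j * (∫ ω in A, f i j ω ∂μ - μ.real A * k i j) := by
  have hint : ∀ i j, Integrable (fun ω => c i j * (f i j ω - k i j)) (μ.restrict A) :=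
    fun i j => (((hf i j).sub (integrable_const _)).const_mul _).integrableOn
  rw [integral_finsetSum _ fun i _ => integrable_finsetSum _ fun j _ => hint i j]
  refine Finset.sum_congr rfl fun i _ => ?_
  rw [integral_finsetSum _ fun j _ => hint i j]
  refine Finset.sum_congr rfl fun j _ => ?_
  rw [integral_const_mul, integral_sub (hf i j).integrableOn (integrable_const _),
    setIntegral_const, smul_eq_mul]

end Integration

section Design

variable {Ω ι : Type*} {m₀ : MeasurableSpace Ω} {m T : ℕ}
  {D1 : ι → ℕ → Ω → Bool} {Dm1 : ι → ℕ → Ω → Fin m → Bool}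

-- its fibres are the atoms of the design on which the regression weights are constant
def designCell (D1 : ι → ℕ → Ω → Bool) (Dm1 : ι → ℕ → Ω → Fin m → Bool) (T : ℕ) (ω : Ω) :
    ι → Fin (T + 1) → Bool × (Fin m → Bool) :=
  fun g t => (D1 g t ω, Dm1 g t ω)

theorem designCell_eq_designCell {ω ω' : Ω}
    (h : designCell D1 Dm1 T ω = designCell D1 Dm1 T ω') (g : ι) {t : ℕ} (ht : t ≤ T) :
    D1 g t ω = D1 g t ω' ∧ Dm1 g t ω = Dm1 g t ω' :=
  Prod.ext_iff.mp (congrFun (congrFun h g) ⟨t, Nat.lt_succ_of_le ht⟩)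

theorem measurable_designCell (hD1 : ∀ g t, Measurable (D1 g t))
    (hDm1 : ∀ g t, Measurable (Dm1 g t)) : Measurable (designCell D1 Dm1 T) :=
  measurable_pi_lambda _ fun g => measurable_pi_lambda _ fun t => (hD1 g t).prodMk (hDm1 g t)

theorem measurable_design (hD1 : ∀ g t, Measurable (D1 g t))
    (hDm1 : ∀ g t, Measurable (Dm1 g t)) :
    Measurable fun ω => fun (g : ι) (t : ℕ) => (D1 g t ω, Dm1 g t ω) :=
  measurable_pi_lambda _ fun g => measurable_pi_lambda _ fun t => (hD1 g t).prodMk (hDm1 g t)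

theorem measurableSet_designCell_preimage [Countable ι] {mD : MeasurableSpace Ω}
    (hmD : mD = MeasurableSpace.comap
      (fun ω => fun (g : ι) (t : ℕ) => (D1 g t ω, Dm1 g t ω)) inferInstance)
    (q : ι → Fin (T + 1) → Bool × (Fin m → Bool)) :
    MeasurableSet[mD] (designCell D1 Dm1 T ⁻¹' {q}) := by
  have hrestrict : Measurable
      fun (f : ι → ℕ → Bool × (Fin m → Bool)) (g : ι) (t : Fin (T + 1)) => f g t :=
    measurable_pi_lambda _ fun g => measurable_pi_lambda _ fun t =>
      (measurable_pi_apply (t : ℕ)).comp (measurable_pi_apply g)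
  subst hmD
  exact ⟨_, hrestrict (measurableSet_singleton q), rfl⟩

theorem setIntegral_designCell_sub_eq_measureReal_mul [Fintype ι] {μ : Measure Ω}
    [IsFiniteMeasure μ] {po : ι → ℕ → Bool → (Fin m → Bool) → Ω → ℝ}
    (hpomeas : ∀ g t d dm, Measurable (po g t d dm))
    (hpoint : ∀ g t d dm, Integrable (po g t d dm) μ)
    (hD1meas : ∀ g t, Measurable (D1 g t)) (hDm1meas : ∀ g t, Measurable (Dm1 g t))
    {mDg : ι → MeasurableSpace Ω}
    (hmDg : ∀ g, mDg g = MeasurableSpace.comap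
      (fun ω => fun (t : ℕ) => (D1 g t ω, Dm1 g t ω)) inferInstance)
    (hindep : iIndepFun
      (fun (g : ι) (ω : Ω) =>
        ((fun (t : ℕ) => (D1 g t ω, Dm1 g t ω)),
         (fun (t : ℕ) (d : Bool) (dm : Fin m → Bool) => po g t d dm ω))) μ)
    (hexo : ∀ g t, 2 ≤ t → t ≤ T →
      μ[fun ω => po g t false (fun _ => false) ω -
          po g (t - 1) false (fun _ => false) ω | mDg g]
        =ᵐ[μ] fun _ => ∫ ω, (po g t false (fun _ => false) ω -
          po g (t - 1) false (fun _ => false) ω) ∂μ)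
    (q : ι → Fin (T + 1) → Bool × (Fin m → Bool)) (g : ι) {t : ℕ} (ht2 : 2 ≤ t) (htT : t ≤ T) :
    ∫ ω in designCell D1 Dm1 T ⁻¹' {q}, po g t false (fun _ => false) ω ∂μ
      - ∫ ω in designCell D1 Dm1 T ⁻¹' {q}, po g (t - 1) false (fun _ => false) ω ∂μ
      = μ.real (designCell D1 Dm1 T ⁻¹' {q}) * ∫ ω, (po g t false (fun _ => false) ω
          - po g (t - 1) false (fun _ => false) ω) ∂μ := by
  set V : ι → Ω → (ℕ → Bool × (Fin m → Bool)) × (ℕ → Bool → (Fin m → Bool) → ℝ) :=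
    fun g ω => ((fun t => (D1 g t ω, Dm1 g t ω)), (fun t d dm => po g t d dm ω))
  set R : ι → Set (ℕ → Bool × (Fin m → Bool)) :=
    fun g => ⋂ t : Fin (T + 1), (fun f => f t) ⁻¹' {q g t}
  have hR : ∀ g, MeasurableSet (R g) := fun g =>
    MeasurableSet.iInter fun t => measurable_pi_apply _ (measurableSet_singleton _)
  have hVm : ∀ g, Measurable (V g) := fun g =>
    (measurable_pi_lambda _ fun t => (hD1meas g t).prodMk (hDm1meas g t)).prodMk
      (measurable_pi_lambda _ fun t => measurable_pi_lambda _ fun d =>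
        measurable_pi_lambda _ fun dm => hpomeas g t d dm)
  have hcell : designCell D1 Dm1 T ⁻¹' {q} = ⋂ g, V g ⁻¹' (Prod.fst ⁻¹' R g) := by
    ext ω
    simp [designCell, V, R, funext_iff]
  have hφ : Measurable fun p : (ℕ → Bool × (Fin m → Bool)) × (ℕ → Bool → (Fin m → Bool) → ℝ) =>
      p.2 t false (fun _ => false) - p.2 (t - 1) false (fun _ => false) := by
    fun_prop
  have hmDg_le : mDg g ≤ m₀ := by
    rw [hmDg g]
    exact (measurable_pi_lambda _ fun t => (hD1meas g t).prodMk (hDm1meas g t)).comap_le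
  have hA : MeasurableSet[mDg g] (V g ⁻¹' (Prod.fst ⁻¹' R g)) := by
    rw [hmDg g]
    exact ⟨R g, hR g, rfl⟩
  rw [← integral_sub (hpoint _ _ _ _).integrableOn (hpoint _ _ _ _).integrableOn, hcell]
  exact setIntegral_iInter_preimage_eq_measureReal_mul_of_setIntegral_eq hindep hVm
    (fun g => measurable_fst (hR g)) g hφ
    (setIntegral_eq_measureReal_mul_of_condExp_ae_eq hmDg_le hA
      ((hpoint _ _ _ _).sub (hpoint _ _ _ _)) (hexo g t ht2 htT) fun _ _ => rfl)

theorem setIntegral_designCell_eq_add_measureReal_mul [Countable ι] {μ : Measure Ω}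
    [IsFiniteMeasure μ] {po : ι → ℕ → Bool → (Fin m → Bool) → Ω → ℝ}
    (hpoint : ∀ g t d dm, Integrable (po g t d dm) μ)
    (hD1meas : ∀ g t, Measurable (D1 g t)) (hDm1meas : ∀ g t, Measurable (Dm1 g t))
    {mD : MeasurableSpace Ω}
    (hmD : mD = MeasurableSpace.comap
      (fun ω => fun (g : ι) (t : ℕ) => (D1 g t ω, Dm1 g t ω)) inferInstance)
    {g : ι} {t : ℕ} {τ : (Fin m → Bool) → ℝ}
    (hadd : μ[fun ω => po g t false (Dm1 g t ω) ω - po g t false (fun _ => false) ω | mD]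
      =ᵐ[μ] fun ω => τ (Dm1 g t ω))
    {q : ι → Fin (T + 1) → Bool × (Fin m → Bool)} {ω₀ : Ω}
    (hω₀ : ω₀ ∈ designCell D1 Dm1 T ⁻¹' {q}) (htT : t ≤ T) :
    ∫ ω in designCell D1 Dm1 T ⁻¹' {q}, po g t false (Dm1 g t ω₀) ω ∂μ =
      ∫ ω in designCell D1 Dm1 T ⁻¹' {q}, po g t false (fun _ => false) ω ∂μ
        + μ.real (designCell D1 Dm1 T ⁻¹' {q}) * τ (Dm1 g t ω₀) := by
  have hsame : ∀ ω ∈ designCell D1 Dm1 T ⁻¹' {q}, Dm1 g t ω = Dm1 g t ω₀ := fun ω hω =>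
    (designCell_eq_designCell (hω.trans hω₀.symm) g htT).2
  have hcond := setIntegral_eq_measureReal_mul_of_condExp_ae_eq
    (hmD ▸ (measurable_design hD1meas hDm1meas).comap_le)
    (measurableSet_designCell_preimage hmD q)
    (integrable_apply_of_finite (hDm1meas g t) fun dm => (hpoint g t false dm).sub
      (hpoint g t false fun _ => false)) hadd fun ω hω => by rw [hsame ω hω]
  have hcell : ∫ ω in designCell D1 Dm1 T ⁻¹' {q},
      (po g t false (Dm1 g t ω₀) ω - po g t false (fun _ => false) ω) ∂μ
        = μ.real (designCell D1 Dm1 T ⁻¹' {q}) * τ (Dm1 g t ω₀) :=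
    (setIntegral_congr_fun (measurable_designCell hD1meas hDm1meas (measurableSet_singleton q))
      fun ω hω => by simp only [Pi.sub_apply, hsame ω hω]).trans hcond
  rw [integral_sub (hpoint _ _ _ _).integrableOn (hpoint _ _ _ _).integrableOn] at hcell
  linarith

theorem integral_sum_sum_mul_untreated_sub_eq_zero [Fintype ι] {μ : Measure Ω}
    [IsFiniteMeasure μ] {po : ι → ℕ → Bool → (Fin m → Bool) → Ω → ℝ}
    (hpomeas : ∀ g t d dm, Measurable (po g t d dm))
    (hpoint : ∀ g t d dm, Integrable (po g t d dm) μ)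
    (hD1meas : ∀ g t, Measurable (D1 g t)) (hDm1meas : ∀ g t, Measurable (Dm1 g t))
    {mD : MeasurableSpace Ω}
    (hmD : mD = MeasurableSpace.comap
      (fun ω => fun (g : ι) (t : ℕ) => (D1 g t ω, Dm1 g t ω)) inferInstance)
    {mDg : ι → MeasurableSpace Ω}
    (hmDg : ∀ g, mDg g = MeasurableSpace.comap
      (fun ω => fun (t : ℕ) => (D1 g t ω, Dm1 g t ω)) inferInstance)
    (hindep : iIndepFun
      (fun (g : ι) (ω : Ω) =>
        ((fun (t : ℕ) => (D1 g t ω, Dm1 g t ω)),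
         (fun (t : ℕ) (d : Bool) (dm : Fin m → Bool) => po g t d dm ω))) μ)
    (hexo : ∀ g t, 2 ≤ t → t ≤ T →
      μ[fun ω => po g t false (fun _ => false) ω -
          po g (t - 1) false (fun _ => false) ω | mDg g]
        =ᵐ[μ] fun _ => ∫ ω, (po g t false (fun _ => false) ω -
          po g (t - 1) false (fun _ => false) ω) ∂μ)
    (hct : ∀ g g' t, 2 ≤ t → t ≤ T →
      ∫ ω, (po g t false (fun _ => false) ω -
        po g (t - 1) false (fun _ => false) ω) ∂μ =
      ∫ ω, (po g' t false (fun _ => false) ω -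
        po g' (t - 1) false (fun _ => false) ω) ∂μ)
    {τ : ι → ℕ → (Fin m → Bool) → ℝ}
    (hadd : ∀ g t, 1 ≤ t → t ≤ T →
      μ[fun ω => po g t false (Dm1 g t ω) ω - po g t false (fun _ => false) ω | mD]
        =ᵐ[μ] fun ω => τ g t (Dm1 g t ω))
    {W : Ω → ι → ℕ → ℝ}
    (hWcell : ∀ ω ω', designCell D1 Dm1 T ω = designCell D1 Dm1 T ω' →
      ∀ g, ∀ t ∈ Finset.Icc 1 T, W ω g t = W ω' g t)
    (hrow : ∀ ω g, ∑ t ∈ Finset.Icc 1 T, W ω g t = 0)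
    (hcol : ∀ ω, ∀ t ∈ Finset.Icc 1 T, ∑ g, W ω g t = 0)
    (hint : Integrable (fun ω => ∑ g, ∑ t ∈ Finset.Icc 1 T,
      W ω g t * (po g t false (Dm1 g t ω) ω - τ g t (Dm1 g t ω))) μ) :
    ∫ ω, ∑ g, ∑ t ∈ Finset.Icc 1 T,
      W ω g t * (po g t false (Dm1 g t ω) ω - τ g t (Dm1 g t ω)) ∂μ = 0 := by
  classical
  rw [integral_eq_sum_setIntegral_preimage_singleton (measurable_designCell hD1meas hDm1meas) hint]
  refine Finset.sum_eq_zero fun q _ => ?_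
  rcases (designCell D1 Dm1 T ⁻¹' {q}).eq_empty_or_nonempty with hq | ⟨ω₀, hω₀⟩
  · rw [hq, setIntegral_empty]
  have hsame : ∀ ω ∈ designCell D1 Dm1 T ⁻¹' {q}, ∀ g, ∀ t ∈ Finset.Icc 1 T,
      W ω g t = W ω₀ g t ∧ Dm1 g t ω = Dm1 g t ω₀ := fun ω hω g t ht =>
    ⟨hWcell ω ω₀ (hω.trans hω₀.symm) g t ht,
      (designCell_eq_designCell (hω.trans hω₀.symm) g (Finset.mem_Icc.mp ht).2).2⟩
  calc ∫ ω in designCell D1 Dm1 T ⁻¹' {q}, ∑ g, ∑ t ∈ Finset.Icc 1 T,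
        W ω g t * (po g t false (Dm1 g t ω) ω - τ g t (Dm1 g t ω)) ∂μ
      = ∫ ω in designCell D1 Dm1 T ⁻¹' {q}, ∑ g, ∑ t ∈ Finset.Icc 1 T,
          W ω₀ g t * (po g t false (Dm1 g t ω₀) ω - τ g t (Dm1 g t ω₀)) ∂μ :=
        setIntegral_congr_fun (measurable_designCell hD1meas hDm1meas (measurableSet_singleton q))
          fun ω hω => Finset.sum_congr rfl fun g _ => Finset.sum_congr rfl fun t ht => by
            rw [(hsame ω hω g t ht).1, (hsame ω hω g t ht).2]
    _ = ∑ g, ∑ t ∈ Finset.Icc 1 T, W ω₀ g t *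
          (∫ ω in designCell D1 Dm1 T ⁻¹' {q}, po g t false (Dm1 g t ω₀) ω ∂μ
            - μ.real (designCell D1 Dm1 T ⁻¹' {q}) * τ g t (Dm1 g t ω₀)) :=
        setIntegral_sum_sum_mul_sub_const _ fun g t => hpoint _ _ _ _
    _ = ∑ g, ∑ t ∈ Finset.Icc 1 T,
          W ω₀ g t * ∫ ω in designCell D1 Dm1 T ⁻¹' {q}, po g t false (fun _ => false) ω ∂μ :=
        Finset.sum_congr rfl fun g _ => Finset.sum_congr rfl fun t ht => by
          rw [setIntegral_designCell_eq_add_measureReal_mul hpoint hD1meas hDm1meas hmD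
            (hadd g t (Finset.mem_Icc.mp ht).1 (Finset.mem_Icc.mp ht).2) hω₀
            (Finset.mem_Icc.mp ht).2, add_sub_cancel_right]
    _ = 0 := sum_sum_mul_eq_zero_of_parallel_trends (fun g _ => hrow ω₀ g) (hcol ω₀)
        fun g _ g' _ t ht2 htT => by
          rw [setIntegral_designCell_sub_eq_measureReal_mul hpomeas hpoint hD1meas hDm1meas hmDg
            hindep hexo q g ht2 htT, setIntegral_designCell_sub_eq_measureReal_mul hpomeas hpoint
            hD1meas hDm1meas hmDg hindep hexo q g' ht2 htT, hct g g' t ht2 htT]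

end Design

theorem twfe_decomposition_no_complementarity_general
    (G T K : ℕ)
    {Ω : Type} [inst : MeasurableSpace Ω]
    (μ : Measure Ω) [IsProbabilityMeasure μ]
    (po : Fin G → ℕ → Bool → (Fin (K - 1) → Bool) → Ω → ℝ)
    (hpomeas : ∀ g t d dm, Measurable (po g t d dm))
    (hpoint : ∀ g t d dm, Integrable (po g t d dm) μ)
    (D1 : Fin G → ℕ → Ω → Bool)
    (Dm1 : Fin G → ℕ → Ω → Fin (K - 1) → Bool)
    (hD1meas : ∀ g t, Measurable (D1 g t))
    (hDm1meas : ∀ g t, Measurable (Dm1 g t))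
    (Y : Fin G → ℕ → Ω → ℝ)
    (hY : ∀ g t ω, Y g t ω = po g t (D1 g t ω) (Dm1 g t ω) ω)
    (mD : MeasurableSpace Ω)
    (hmD : mD = MeasurableSpace.comap
      (fun ω => fun (g : Fin G) (t : ℕ) => (D1 g t ω, Dm1 g t ω)) inferInstance)
    (mDg : Fin G → MeasurableSpace Ω)
    (hmDg : ∀ g, mDg g = MeasurableSpace.comap
      (fun ω => fun (t : ℕ) => (D1 g t ω, Dm1 g t ω)) inferInstance)
    -- independent groups
    (hindep : iIndepFun
      (fun (g : Fin G) (ω : Ω) =>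
        ((fun (t : ℕ) => (D1 g t ω, Dm1 g t ω)),
         (fun (t : ℕ) (d : Bool) (dm : Fin (K - 1) → Bool) => po g t d dm ω))) μ)
    -- strong exogeneity of the never-treated outcome
    (hexo : ∀ g t, 2 ≤ t → t ≤ T →
      μ[fun ω => po g t false (fun _ => false) ω -
          po g (t - 1) false (fun _ => false) ω | mDg g]
        =ᵐ[μ] fun _ => ∫ ω, (po g t false (fun _ => false) ω -
          po g (t - 1) false (fun _ => false) ω) ∂μ)
    -- common trends of the never-treated outcome
    (hct : ∀ g g' t, 2 ≤ t → t ≤ T →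
      ∫ ω, (po g t false (fun _ => false) ω -
        po g (t - 1) false (fun _ => false) ω) ∂μ =
      ∫ ω, (po g' t false (fun _ => false) ω -
        po g' (t - 1) false (fun _ => false) ω) ∂μ)
    -- weights (number of observations per cell), balanced panel
    (N : Fin G → ℕ → ℝ) (hN : ∀ g t, 0 < N g t)
    -- real-valued treatments
    (d1R : Fin G → ℕ → Ω → ℝ) (dmR : Fin (K - 1) → Fin G → ℕ → Ω → ℝ)
    (hd1R : ∀ g t ω, d1R g t ω = if D1 g t ω then 1 else 0)
    (hdmR : ∀ k g t ω, dmR k g t ω = if Dm1 g t ω k then 1 else 0)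
    -- the TWFE regression: realization-by-realization weighted least squares
    (βhat αhat : Ω → ℝ) (γhat : Ω → Fin G → ℝ) (νhat : Ω → ℕ → ℝ)
    (ζhat : Ω → Fin (K - 1) → ℝ)
    (hreg : ∀ ω, ∀ (α' β' : ℝ) (γ' : Fin G → ℝ) (ν' : ℕ → ℝ)
        (ζ' : Fin (K - 1) → ℝ),
      ∑ g, ∑ t ∈ Finset.Icc 1 T, N g t * (Y g t ω - αhat ω - γhat ω g - νhat ω t
        - βhat ω * d1R g t ω - ∑ k, ζhat ω k * dmR k g t ω) ^ 2 ≤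
      ∑ g, ∑ t ∈ Finset.Icc 1 T, N g t * (Y g t ω - α' - γ' g - ν' t
        - β' * d1R g t ω - ∑ k, ζ' k * dmR k g t ω) ^ 2)
    -- first-stage regression of D¹ on the other regressors, and its residual ε
    (a0 : Ω → ℝ) (c0 : Ω → Fin G → ℝ) (v0 : Ω → ℕ → ℝ) (z0 : Ω → Fin (K - 1) → ℝ)
    (hfs : ∀ ω, ∀ (a' : ℝ) (c' : Fin G → ℝ) (v' : ℕ → ℝ) (z' : Fin (K - 1) → ℝ),
      ∑ g, ∑ t ∈ Finset.Icc 1 T, N g t * (d1R g t ω - a0 ω - c0 ω g - v0 ω t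
        - ∑ k, z0 ω k * dmR k g t ω) ^ 2 ≤
      ∑ g, ∑ t ∈ Finset.Icc 1 T, N g t * (d1R g t ω - a' - c' g - v' t
        - ∑ k, z' k * dmR k g t ω) ^ 2)
    (ε : Ω → Fin G → ℕ → ℝ)
    (hε : ∀ ω g t, ε ω g t = d1R g t ω - a0 ω - c0 ω g - v0 ω t
      - ∑ k, z0 ω k * dmR k g t ω)
    -- number of treated observations, and the normalization of the weights
    (N1 : Ω → ℝ)
    (hN1pos : ∀ ω, 0 < N1 ω)
    (εbar : Ω → ℝ)
    (hεbar : ∀ ω, εbar ω =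
      ∑ g, ∑ t ∈ Finset.Icc 1 T, N g t / N1 ω * d1R g t ω * ε ω g t)
    (hεbarne : ∀ ω, εbar ω ≠ 0)  -- no collinearity
    (w : Ω → Fin G → ℕ → ℝ) (hw : ∀ ω g t, w ω g t = ε ω g t / εbar ω)
    -- treatment effects
    (Δ1 Δm : Fin G → ℕ → Ω → ℝ)
    (hΔ1 : ∀ g t ω, Δ1 g t ω =
      po g t true (Dm1 g t ω) ω - po g t false (Dm1 g t ω) ω)
    (hΔm : ∀ g t ω, Δm g t ω =
      po g t false (Dm1 g t ω) ω - po g t false (fun _ => false) ω)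
    -- no complementarity between the other treatments
    (δk : Fin (K - 1) → Fin G → ℕ → ℝ)
    (hadd : ∀ g t, 1 ≤ t → t ≤ T →
      μ[Δm g t | mD] =ᵐ[μ] fun ω => ∑ k, dmR k g t ω * δk k g t)
    -- the decomposition's right-hand side
    (RHS : Ω → ℝ)
    (hRHS : ∀ ω, RHS ω = (∑ g, ∑ t ∈ Finset.Icc 1 T,
        d1R g t ω * (N g t / N1 ω) * w ω g t * Δ1 g t ω)
      + ∑ k, ∑ g, ∑ t ∈ Finset.Icc 1 T,
        dmR k g t ω * (N g t / N1 ω) * w ω g t * δk k g t)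
    (hβint : Integrable βhat μ) (hRHSint : Integrable RHS μ) :
    (∫ ω, βhat ω ∂μ = ∫ ω, RHS ω ∂μ) ∧
    (∀ ω, ∑ g, ∑ t ∈ Finset.Icc 1 T, d1R g t ω * (N g t / N1 ω) * w ω g t = 1) ∧
    ∀ k ω, ∑ g, ∑ t ∈ Finset.Icc 1 T,
      dmR k g t ω * (N g t / N1 ω) * w ω g t = 0 := by
  have hfit : ∀ ω, IsTWFEFit univ (Finset.Icc 1 T) N (fun g t => d1R g t ω)
      (fun k g t => dmR k g t ω) (a0 ω) (c0 ω) (v0 ω) (z0 ω) := hfs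
  have hW : ∀ ω g t, N g t / N1 ω * w ω g t =
      twfeWeight univ (Finset.Icc 1 T) N (fun g t => d1R g t ω) (ε ω) g t := fun ω =>
    div_mul_eq_twfeWeight (hN1pos ω).ne' (hεbar ω) (hw ω)
  have hden := fun ω => sum_sum_mul_mul_ne_zero (hN1pos ω).ne' (hεbar ω) (hεbarne ω)
  refine ⟨?_,
    fun ω => by simpa only [mul_assoc, hW] using sum_sum_treatment_mul_twfeWeight_eq_one (hden ω),
    fun k ω => by simpa only [mul_assoc, hW] using
      (hfit ω).sum_sum_regressor_mul_twfeWeight_eq_zero (hε ω) k⟩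
  have hβ : ∀ ω, βhat ω = ∑ g, ∑ t ∈ Finset.Icc 1 T, N g t / N1 ω * w ω g t * Y g t ω :=
    fun ω => by simpa only [hW] using (hfit ω).eq_sum_sum_twfeWeight_mul (hε ω) (hreg ω) (hden ω)
  have hpt : ∀ ω, βhat ω - RHS ω = ∑ g, ∑ t ∈ Finset.Icc 1 T, N g t / N1 ω * w ω g t *
      (po g t false (Dm1 g t ω) ω - ∑ k, (if Dm1 g t ω k then 1 else 0) * δk k g t) := by
    intro ω
    rw [hβ, hRHS, sum_sum_mul_mul_sub_eq (y₀ := fun g t => po g t false (Dm1 g t ω) ω)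
      fun g t => by rw [hY, hΔ1, hd1R]; cases D1 g t ω <;> simp]
    simp only [hdmR]
  rw [← sub_eq_zero, ← integral_sub hβint hRHSint, integral_congr_ae (ae_of_all _ hpt)]
  refine integral_sum_sum_mul_untreated_sub_eq_zero
    (τ := fun g t dm => ∑ k, (if dm k then 1 else 0) * δk k g t)
    (W := fun ω g t => N g t / N1 ω * w ω g t) hpomeas hpoint hD1meas hDm1meas hmD hmDg
    hindep hexo hct (fun g t ht1 htT => ?_) (fun ω ω' hcell g t ht => ?_)
    (fun ω g => ?_) (fun ω t ht => ?_) ((hβint.sub hRHSint).congr (ae_of_all _ hpt))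
  · have hcond := hadd g t ht1 htT
    rw [show Δm g t = _ from funext (hΔm g t)] at hcond
    exact hcond.trans (ae_of_all _ fun ω => by simp only [hdmR])
  · have hsame := fun g t (ht : t ∈ Finset.Icc 1 T) =>
      designCell_eq_designCell hcell g (Finset.mem_Icc.mp ht).2
    simpa only [hW] using (hfit ω).twfeWeight_eq_of_eqOn (hε ω) (hfit ω') (hε ω')
      (fun g _ t _ => hN g t) (fun g _ t ht => by rw [hd1R, hd1R, (hsame g t ht).1])
      (fun k g _ t ht => by rw [hdmR, hdmR, (hsame g t ht).2]) (Finset.mem_univ g) ht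
  · simpa only [hW] using (hfit ω).sum_twfeWeight_eq_zero_of_mem_left (hε ω) (Finset.mem_univ g)
  · simpa only [hW] using (hfit ω).sum_twfeWeight_eq_zero_of_mem_right (hε ω) ht

/-- Corollary 2. Under the assumptions of the K-treatment TWFE
decomposition theorem, if in addition `E[Δ^{-1}_{g,t}|𝐃] = Σ_k D^k_{g,t}δ^k_{g,t}`
for constants `δ^k_{g,t}` (no complementarity between treatments 2,...,K), then
`β_fe = E[Σ_{D¹=1}(N/N₁)wΔ¹ + Σ_k Σ_{D^k=1}(N/N₁)wδ^k]`, the weights on the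
own-treatment effects sum to one, and for every `k` the weights on the `δ^k`
terms sum to zero. -/
theorem twfe_decomposition_no_complementarity
    (G T K : ℕ) (hT : 1 ≤ T) (hK : 2 ≤ K)
    {Ω : Type} [inst : MeasurableSpace Ω]
    (μ : Measure Ω) [IsProbabilityMeasure μ]
    (po : Fin G → ℕ → Bool → (Fin (K - 1) → Bool) → Ω → ℝ)
    (hpomeas : ∀ g t d dm, Measurable (po g t d dm))
    (hpoint : ∀ g t d dm, Integrable (po g t d dm) μ)
    (D1 : Fin G → ℕ → Ω → Bool)
    (Dm1 : Fin G → ℕ → Ω → Fin (K - 1) → Bool)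
    (hD1meas : ∀ g t, Measurable (D1 g t))
    (hDm1meas : ∀ g t, Measurable (Dm1 g t))
    (Y : Fin G → ℕ → Ω → ℝ)
    (hY : ∀ g t ω, Y g t ω = po g t (D1 g t ω) (Dm1 g t ω) ω)
    (mD : MeasurableSpace Ω)
    (hmD : mD = MeasurableSpace.comap
      (fun ω => fun (g : Fin G) (t : ℕ) => (D1 g t ω, Dm1 g t ω)) inferInstance)
    (mDg : Fin G → MeasurableSpace Ω)
    (hmDg : ∀ g, mDg g = MeasurableSpace.comap
      (fun ω => fun (t : ℕ) => (D1 g t ω, Dm1 g t ω)) inferInstance)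
    -- independent groups
    (hindep : iIndepFun
      (fun (g : Fin G) (ω : Ω) =>
        ((fun (t : ℕ) => (D1 g t ω, Dm1 g t ω)),
         (fun (t : ℕ) (d : Bool) (dm : Fin (K - 1) → Bool) => po g t d dm ω))) μ)
    -- strong exogeneity of the never-treated outcome
    (hexo : ∀ g t, 2 ≤ t → t ≤ T →
      μ[fun ω => po g t false (fun _ => false) ω -
          po g (t - 1) false (fun _ => false) ω | mDg g]
        =ᵐ[μ] fun _ => ∫ ω, (po g t false (fun _ => false) ω -
          po g (t - 1) false (fun _ => false) ω) ∂μ)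
    -- common trends of the never-treated outcome
    (hct : ∀ g g' t, 2 ≤ t → t ≤ T →
      ∫ ω, (po g t false (fun _ => false) ω -
        po g (t - 1) false (fun _ => false) ω) ∂μ =
      ∫ ω, (po g' t false (fun _ => false) ω -
        po g' (t - 1) false (fun _ => false) ω) ∂μ)
    -- weights (number of observations per cell), balanced panel
    (N : Fin G → ℕ → ℝ) (hN : ∀ g t, 0 < N g t)
    -- real-valued treatments
    (d1R : Fin G → ℕ → Ω → ℝ) (dmR : Fin (K - 1) → Fin G → ℕ → Ω → ℝ)
    (hd1R : ∀ g t ω, d1R g t ω = if D1 g t ω then 1 else 0)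
    (hdmR : ∀ k g t ω, dmR k g t ω = if Dm1 g t ω k then 1 else 0)
    -- the TWFE regression: realization-by-realization weighted least squares
    (βhat αhat : Ω → ℝ) (γhat : Ω → Fin G → ℝ) (νhat : Ω → ℕ → ℝ)
    (ζhat : Ω → Fin (K - 1) → ℝ)
    (hreg : ∀ ω, ∀ (α' β' : ℝ) (γ' : Fin G → ℝ) (ν' : ℕ → ℝ)
        (ζ' : Fin (K - 1) → ℝ),
      ∑ g, ∑ t ∈ Finset.Icc 1 T, N g t * (Y g t ω - αhat ω - γhat ω g - νhat ω t
        - βhat ω * d1R g t ω - ∑ k, ζhat ω k * dmR k g t ω) ^ 2 ≤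
      ∑ g, ∑ t ∈ Finset.Icc 1 T, N g t * (Y g t ω - α' - γ' g - ν' t
        - β' * d1R g t ω - ∑ k, ζ' k * dmR k g t ω) ^ 2)
    -- first-stage regression of D¹ on the other regressors, and its residual ε
    (a0 : Ω → ℝ) (c0 : Ω → Fin G → ℝ) (v0 : Ω → ℕ → ℝ) (z0 : Ω → Fin (K - 1) → ℝ)
    (hfs : ∀ ω, ∀ (a' : ℝ) (c' : Fin G → ℝ) (v' : ℕ → ℝ) (z' : Fin (K - 1) → ℝ),
      ∑ g, ∑ t ∈ Finset.Icc 1 T, N g t * (d1R g t ω - a0 ω - c0 ω g - v0 ω t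
        - ∑ k, z0 ω k * dmR k g t ω) ^ 2 ≤
      ∑ g, ∑ t ∈ Finset.Icc 1 T, N g t * (d1R g t ω - a' - c' g - v' t
        - ∑ k, z' k * dmR k g t ω) ^ 2)
    (ε : Ω → Fin G → ℕ → ℝ)
    (hε : ∀ ω g t, ε ω g t = d1R g t ω - a0 ω - c0 ω g - v0 ω t
      - ∑ k, z0 ω k * dmR k g t ω)
    -- number of treated observations, and the normalization of the weights
    (N1 : Ω → ℝ) (hN1 : ∀ ω, N1 ω = ∑ g, ∑ t ∈ Finset.Icc 1 T, N g t * d1R g t ω)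
    (hN1pos : ∀ ω, 0 < N1 ω)
    (εbar : Ω → ℝ)
    (hεbar : ∀ ω, εbar ω =
      ∑ g, ∑ t ∈ Finset.Icc 1 T, N g t / N1 ω * d1R g t ω * ε ω g t)
    (hεbarne : ∀ ω, εbar ω ≠ 0)  -- no collinearity
    (w : Ω → Fin G → ℕ → ℝ) (hw : ∀ ω g t, w ω g t = ε ω g t / εbar ω)
    -- treatment effects
    (Δ1 Δm : Fin G → ℕ → Ω → ℝ)
    (hΔ1 : ∀ g t ω, Δ1 g t ω =
      po g t true (Dm1 g t ω) ω - po g t false (Dm1 g t ω) ω)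
    (hΔm : ∀ g t ω, Δm g t ω =
      po g t false (Dm1 g t ω) ω - po g t false (fun _ => false) ω)
    -- no complementarity between the other treatments
    (δk : Fin (K - 1) → Fin G → ℕ → ℝ)
    (hadd : ∀ g t, 1 ≤ t → t ≤ T →
      μ[Δm g t | mD] =ᵐ[μ] fun ω => ∑ k, dmR k g t ω * δk k g t)
    -- the decomposition's right-hand side
    (RHS : Ω → ℝ)
    (hRHS : ∀ ω, RHS ω = (∑ g, ∑ t ∈ Finset.Icc 1 T,
        d1R g t ω * (N g t / N1 ω) * w ω g t * Δ1 g t ω)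
      + ∑ k, ∑ g, ∑ t ∈ Finset.Icc 1 T,
        dmR k g t ω * (N g t / N1 ω) * w ω g t * δk k g t)
    (hβint : Integrable βhat μ) (hRHSint : Integrable RHS μ) :
    (∫ ω, βhat ω ∂μ = ∫ ω, RHS ω ∂μ) ∧
    (∀ ω, ∑ g, ∑ t ∈ Finset.Icc 1 T, d1R g t ω * (N g t / N1 ω) * w ω g t = 1) ∧
    ∀ k ω, ∑ g, ∑ t ∈ Finset.Icc 1 T,
      dmR k g t ω * (N g t / N1 ω) * w ω g t = 0 :=
  twfe_decomposition_no_complementarity_general G T K (inst := inst) μ po hpomeas hpoint D1 Dm1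
    hD1meas hDm1meas Y hY mD hmD mDg hmDg hindep hexo hct N hN d1R dmR hd1R hdmR βhat αhat γhat νhat
    ζhat hreg a0 c0 v0 z0 hfs ε hε N1 hN1pos εbar hεbar hεbarne w hw Δ1 Δm hΔ1 hΔm δk hadd RHS hRHS
    hβint hRHSint
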